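/- For a prime p ≥ 5, the number of equivalence classes up to rotation of Hamiltonian cycles on Z/p with no axis of reflective symmetry equals [ (p-1)^2 + (p-1)! − p·(p-1)·2^((p-3)/2)·((p-3)/2)! ] / (2p). -/

import Mathlib

open Equiv
set_option linter.unusedSectionVars false

variable (p : ℕ) [NeZero p]

/-- `σ` is a (directed) Hamiltonian cycle on the `p` vertices `ZMod p`:
a single cycle whose support is everything. -/
def IsHC (σ : Perm (ZMod p)) : Prop := σ.IsCycle ∧ σ.support = Finset.univ

/-- The type of directed Hamiltonian cycles on `ZMod p`. -/
def HC := {σ : Perm (ZMod p) // IsHC p σ}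

/-- Rotation `k ↦ r + k`. -/
def rot (r : ZMod p) : Perm (ZMod p) := Equiv.addLeft r

/-- Reflection `k ↦ s - k`. -/
def reflAt (s : ZMod p) : Perm (ZMod p) := Equiv.subLeft s

/-- `g` fixes the *undirected* cycle underlying `σ` (conjugation can reverse orientation). -/
def FixedBy (g σ : Perm (ZMod p)) : Prop := g * σ * g⁻¹ = σ ∨ g * σ * g⁻¹ = σ⁻¹

lemma rot_zero : rot p 0 = 1 := by ext x; simp [rot]

lemma rot_neg (r : ZMod p) : rot p (-r) = (rot p r)⁻¹ := by
  ext x; simp [rot, neg_add_eq_sub, eq_sub_iff_add_eq]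

lemma rot_add (r s : ZMod p) : rot p (r + s) = rot p r * rot p s := by
  ext x; simp [rot, add_assoc]

/-- The action of a rotation on a cycle, by conjugation. -/
def rotAct (r : ZMod p) (σ : Perm (ZMod p)) : Perm (ZMod p) := rot p r * σ * (rot p r)⁻¹

lemma rotAct_zero (σ : Perm (ZMod p)) : rotAct p 0 σ = σ := by
  simp [rotAct, rot_zero]

lemma rotAct_inv (r : ZMod p) (σ : Perm (ZMod p)) :
    (rotAct p r σ)⁻¹ = rotAct p r σ⁻¹ := by
  simp [rotAct, mul_inv_rev, mul_assoc]

lemma rotAct_rotAct (r s : ZMod p) (σ : Perm (ZMod p)) :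
    rotAct p r (rotAct p s σ) = rotAct p (r + s) σ := by
  simp [rotAct, rot_add, mul_inv_rev, mul_assoc]

lemma rotAct_neg_cancel (r : ZMod p) (σ : Perm (ZMod p)) :
    rotAct p (-r) (rotAct p r σ) = σ := by
  rw [rotAct_rotAct, neg_add_cancel, rotAct_zero]

/-- Setoid identifying a directed cycle with its reversal: undirected cycles. -/
def revSetoid : Setoid (HC p) where
  r σ τ := τ.1 = σ.1 ∨ τ.1 = σ.1⁻¹
  iseqv := by
    constructor
    · exact fun a => Or.inl rfl
    · rintro a b (h | h)
      · exact Or.inl h.symm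
      · right; rw [h, inv_inv]
    · rintro a b c (h1 | h1) (h2 | h2) <;> rw [h2, h1] <;> simp
/-- Undirected Hamiltonian cycles. -/
def UCyc := Quotient (revSetoid p)

/-- Setoid identifying cycles up to rotation and reversal: the equivalence classes
of undirected cycles under rotation. -/
def rotSetoid : Setoid (HC p) where
  r σ τ := ∃ r : ZMod p, τ.1 = rotAct p r σ.1 ∨ τ.1 = (rotAct p r σ.1)⁻¹
  iseqv := by
    constructor
    · exact fun a => ⟨0, Or.inl (by rw [rotAct_zero])⟩
    · rintro a b ⟨r, h | h⟩ <;> refine ⟨-r, ?_⟩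
      · left; rw [h, rotAct_neg_cancel]
      · right; rw [h, rotAct_inv, inv_inv, rotAct_neg_cancel]
    · rintro a b c ⟨r, h1 | h1⟩ ⟨s, h2 | h2⟩ <;> refine ⟨s + r, ?_⟩ <;>
        rw [h2, h1] <;>
        simp [rotAct_inv, rotAct_rotAct]
/-- Rotation classes of undirected Hamiltonian cycles. -/
def RotClasses := Quotient (rotSetoid p)

/-!
Rotation and reversal generate a group of order `2p` acting on the `(p-1)!` directed Hamiltonian
cycles, freely on the asymmetric ones, so there are `2p` asymmetric cycles per asymmetric class.
A Hamiltonian cycle is symmetric about an axis exactly when the reflection reverses it, since a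
reflection has a fixed point and so cannot commute with a `p`-cycle. Writing a cycle as
`f * rot p 1 * f⁻¹` with `f 0 = 0`, it is reversed by `k ↦ -k` iff `f` commutes with `k ↦ -k`;
these `f` form the centralizer of a product of `m = (p-1)/2` transpositions, of order `2^m m!`,
and conjugating by rotations moves this count to every axis. The `p - 1` rotations are reversed
by every reflection and any other cycle by at most one (two axes would make it commute with a
nontrivial rotation, hence be a rotation), so counting pairs (axis, cycle) gives
`(p-1)^2 + #symmetric = p 2^m m!`.
-/

open Equiv.Perm

lemma Fintype.sum_card_subtype_comm {α β : Type*} [Fintype α] [Fintype β] (R : α → β → Prop) :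
    ∑ a, Nat.card {b // R a b} = ∑ b, Nat.card {a // R a b} := by
  classical
  simp only [Nat.card_eq_fintype_card, Fintype.card_subtype, Finset.card_filter]
  exact Finset.sum_comm

lemma Setoid.card_eq_mul_card_classes {X : Type*} [Finite X] (r : Setoid X) {P : X → Prop}
    (hP : ∀ x y, r x y → P x → P y) {k : ℕ} (hk : ∀ x, P x → Nat.card {y // r x y} = k) :
    Nat.card {x // P x} = k * Nat.card {q : Quotient r // ∃ x, Quotient.mk r x = q ∧ P x} := by
  let cls : {x // P x} → {q : Quotient r // ∃ x, Quotient.mk r x = q ∧ P x} :=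
    fun x => ⟨Quotient.mk r x, x, rfl, x.2⟩
  have hfiber : ∀ q, Nat.card {x // cls x = q} = k := by
    rintro ⟨_, x₀, rfl, hx₀⟩
    rw [← hk x₀ hx₀]
    refine Nat.card_congr
      { toFun := fun x => ⟨x.1.1, Quotient.exact (congrArg Subtype.val x.2).symm⟩
        invFun := fun y => ⟨⟨y.1, hP _ _ y.2 hx₀⟩, Subtype.ext (Quotient.sound y.2).symm⟩
        left_inv := fun _ => rfl
        right_inv := fun _ => rfl }
  have := Fintype.ofFinite {q : Quotient r // ∃ x, Quotient.mk r x = q ∧ P x}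
  rw [← Nat.card_congr (Equiv.sigmaFiberEquiv cls), Nat.card_sigma, Finset.sum_congr rfl
    fun q _ => hfiber q, Finset.sum_const, Finset.card_univ, smul_eq_mul, mul_comm,
    Nat.card_eq_fintype_card]

lemma Equiv.Perm.card_fixing {α : Type*} [Finite α] (a : α) :
    Nat.card {f : Perm α // f a = a} = (Nat.card α - 1).factorial := by
  classical
  have e : Perm {x // x ≠ a} ≃ {f : Perm α // f a = a} :=
    (Perm.subtypeEquivSubtypePerm (· ≠ a)).trans (Equiv.subtypeEquivRight (by simp))
  have := Fintype.ofFinite α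
  rw [← Nat.card_congr e, Nat.card_perm, Nat.card_eq_fintype_card, Nat.card_eq_fintype_card,
    Fintype.card_subtype_compl, Fintype.card_subtype_eq]

lemma Commute.apply_eq_self_of_fixed_unique {α : Type*} {g f : Perm α} (h : Commute g f)
    {a : α} (ha : ∀ x, g x = x ↔ x = a) : f a = a :=
  (ha _).1 <| by rw [← Perm.mul_apply, h.eq, Perm.mul_apply, (ha a).2 rfl]

def Reverses {α : Type*} (g σ : Perm α) : Prop := g * σ * g⁻¹ = σ⁻¹

lemma reverses_conj_iff {α : Type*} (c g σ : Perm α) :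
    Reverses (c * g * c⁻¹) (c * σ * c⁻¹) ↔ Reverses g σ := by
  have lhs : c * g * c⁻¹ * (c * σ * c⁻¹) * (c * g * c⁻¹)⁻¹ = c * (g * σ * g⁻¹) * c⁻¹ := by
    group
  have rhs : (c * σ * c⁻¹)⁻¹ = c * σ⁻¹ * c⁻¹ := by group
  rw [Reverses, Reverses, lhs, rhs, mul_left_inj, mul_right_inj]

lemma Reverses.commute_mul {α : Type*} {g h σ : Perm α} (hg : Reverses g σ)
    (hh : Reverses h σ) : Commute (g * h) σ := by
  rw [Commute, SemiconjBy, ← mul_inv_eq_iff_eq_mul]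
  calc g * h * σ * (g * h)⁻¹ = g * (h * σ * h⁻¹) * g⁻¹ := by group
    _ = (g * σ * g⁻¹)⁻¹ := by rw [hh]; group
    _ = σ := by rw [hg, inv_inv]

section General

variable {n : ℕ} [NeZero n]

lemma rot_apply (r x : ZMod n) : rot n r x = r + x := rfl

lemma reflAt_apply (s x : ZMod n) : reflAt n s x = s - x := rfl

lemma rot_pow (r : ZMod n) (k : ℕ) : rot n r ^ k = rot n (k * r) := by
  induction k with
  | zero => simp [rot_zero]
  | succ k ih => rw [pow_succ, ih, ← rot_add]; push_cast; ring_nf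

lemma commute_rot_rot (r s : ZMod n) : Commute (rot n r) (rot n s) := by
  rw [Commute, SemiconjBy, ← rot_add, ← rot_add, add_comm]

lemma reflAt_inv (s : ZMod n) : (reflAt n s)⁻¹ = reflAt n s := by
  rw [inv_eq_iff_mul_eq_one]; ext x; simp [reflAt_apply]

lemma reflAt_mul_reflAt (s t : ZMod n) : reflAt n s * reflAt n t = rot n (s - t) := by
  ext x; simp only [Perm.mul_apply, reflAt_apply, rot_apply]; ring

lemma reflAt_conj_rot (s r : ZMod n) :
    reflAt n s * rot n r * (reflAt n s)⁻¹ = (rot n r)⁻¹ := by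
  rw [reflAt_inv, ← rot_neg]; ext x
  simp only [Perm.mul_apply, reflAt_apply, rot_apply]; ring

lemma rot_conj_reflAt (r s : ZMod n) :
    rot n r * reflAt n s * (rot n r)⁻¹ = reflAt n (s + 2 * r) := by
  rw [← rot_neg]; ext x
  simp only [Perm.mul_apply, reflAt_apply, rot_apply]; ring

lemma eq_rot_of_commute_rot_one {σ : Perm (ZMod n)} (h : Commute (rot n 1) σ) :
    σ = rot n (σ 0) := by
  have step : ∀ x, σ (1 + x) = 1 + σ x := fun x => (congrArg (· x) h).symm
  have key : ∀ k : ℕ, σ k = σ 0 + k := by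
    intro k
    induction k with
    | zero => simp
    | succ k ih => rw [Nat.cast_succ, add_comm _ (1 : ZMod n), step, ih]; ring
  ext x
  rw [rot_apply, ← ZMod.natCast_zmod_val x, key]

lemma eq_of_conj_rot_one_eq {f g : Perm (ZMod n)} (hf : f 0 = 0) (hg : g 0 = 0)
    (h : f * rot n 1 * f⁻¹ = g * rot n 1 * g⁻¹) : f = g := by
  have hc : Commute (rot n 1) (g⁻¹ * f) :=
    calc rot n 1 * (g⁻¹ * f) = g⁻¹ * (g * rot n 1 * g⁻¹) * f := by group
      _ = g⁻¹ * (f * rot n 1 * f⁻¹) * f := by rw [h]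
      _ = g⁻¹ * f * rot n 1 := by group
  have hg' : g⁻¹ 0 = 0 := Perm.inv_eq_iff_eq.2 hg.symm
  have := eq_rot_of_commute_rot_one hc
  rw [Perm.mul_apply, hf, hg', rot_zero, inv_mul_eq_one] at this
  exact this.symm

lemma reverses_conj_rot_one_iff {f g : Perm (ZMod n)} (hf : f 0 = 0)
    (hg : g 0 = 0) (hrev : Reverses g (rot n 1)) :
    Reverses g (f * rot n 1 * f⁻¹) ↔ Commute g f := by
  have lhs : g * (f * rot n 1 * f⁻¹) * g⁻¹ = g * f * rot n 1 * (g * f)⁻¹ := by group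
  have rhs : (f * rot n 1 * f⁻¹)⁻¹ = f * g * rot n 1 * (f * g)⁻¹ := by
    calc (f * rot n 1 * f⁻¹)⁻¹ = f * (rot n 1)⁻¹ * f⁻¹ := by group
      _ = f * g * rot n 1 * (f * g)⁻¹ := by rw [← hrev]; group
  rw [Reverses, lhs, rhs, Commute, SemiconjBy]
  refine ⟨eq_of_conj_rot_one_eq (by simp [hf, hg]) (by simp [hf, hg]), fun h => by rw [h]⟩

lemma rotAct_eq_rotAct_iff (r r' : ZMod n) (σ τ : Perm (ZMod n)) :
    rotAct n r σ = rotAct n r' τ ↔ rotAct n (r - r') σ = τ := by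
  constructor
  · intro h; rw [← neg_add_eq_sub, ← rotAct_rotAct, h, rotAct_neg_cancel]
  · intro h; rw [← h, rotAct_rotAct, add_sub_cancel]

lemma rotAct_eq_self_iff (r : ZMod n) (σ : Perm (ZMod n)) :
    rotAct n r σ = σ ↔ Commute (rot n r) σ := mul_inv_eq_iff_eq_mul

lemma fixedBy_inv_iff (g σ : Perm (ZMod n)) : FixedBy n g σ⁻¹ ↔ FixedBy n g σ := by
  rw [FixedBy, FixedBy, show g * σ⁻¹ * g⁻¹ = (g * σ * g⁻¹)⁻¹ by group, inv_inj, inv_inj]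

lemma fixedBy_conj_iff (c g σ : Perm (ZMod n)) :
    FixedBy n (c * g * c⁻¹) (c * σ * c⁻¹) ↔ FixedBy n g σ := by
  have lhs : c * g * c⁻¹ * (c * σ * c⁻¹) * (c * g * c⁻¹)⁻¹ = c * (g * σ * g⁻¹) * c⁻¹ := by
    group
  have rhs : (c * σ * c⁻¹)⁻¹ = c * σ⁻¹ * c⁻¹ := by group
  rw [FixedBy, FixedBy, lhs, rhs, mul_left_inj, mul_right_inj, mul_left_inj, mul_right_inj]

lemma fixedBy_reflAt_rotAct_iff (r s : ZMod n) (σ : Perm (ZMod n)) :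
    FixedBy n (reflAt n s) (rotAct n r σ) ↔ FixedBy n (reflAt n (s - 2 * r)) σ := by
  have : reflAt n s = rot n r * reflAt n (s - 2 * r) * (rot n r)⁻¹ := by
    rw [rot_conj_reflAt, sub_add_cancel]
  rw [this, rotAct, fixedBy_conj_iff]

namespace IsHC

variable {σ : Perm (ZMod n)}

lemma apply_ne (h : IsHC n σ) (x : ZMod n) : σ x ≠ x :=
  Perm.mem_support.1 (h.2 ▸ Finset.mem_univ x)

lemma conj (h : IsHC n σ) (c : Perm (ZMod n)) : IsHC n (c * σ * c⁻¹) := by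
  refine ⟨h.1.conj, Finset.eq_univ_of_forall fun x => Perm.mem_support.2 ?_⟩
  rw [Perm.mul_apply, Perm.mul_apply, Ne, ← Perm.eq_inv_iff_eq]
  exact h.apply_ne (c⁻¹ x)

lemma inv (h : IsHC n σ) : IsHC n σ⁻¹ :=
  ⟨h.1.inv, by rw [Perm.support_inv, h.2]⟩

lemma cycleType_eq (h : IsHC n σ) : σ.cycleType = {n} := by
  rw [h.1.cycleType, h.2, Finset.card_univ, ZMod.card]

end IsHC

lemma isHC_conj_iff {σ : Perm (ZMod n)} (c : Perm (ZMod n)) :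
    IsHC n (c * σ * c⁻¹) ↔ IsHC n σ :=
  ⟨fun h => by simpa [mul_assoc] using h.conj c⁻¹, fun h => h.conj c⟩

def HC.conjEquiv (c : Perm (ZMod n)) : HC n ≃ HC n :=
  (MulAut.conj c).toEquiv.subtypeEquiv fun _ => (isHC_conj_iff c).symm

lemma asymmetric_of_rel {σ τ : HC n} (h : rotSetoid n σ τ)
    (hσ : ∀ s, ¬ FixedBy n (reflAt n s) σ.1) (s : ZMod n) : ¬ FixedBy n (reflAt n s) τ.1 := by
  intro hf
  obtain ⟨r, hτ⟩ := h
  have : FixedBy n (reflAt n s) (rotAct n r σ.1) := by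
    rcases hτ with hτ | hτ <;> rw [hτ] at hf
    exacts [hf, (fixedBy_inv_iff _ _).1 hf]
  exact hσ _ ((fixedBy_reflAt_rotAct_iff r s σ.1).1 this)

lemma notMem_range_rot_of_asymmetric {σ : Perm (ZMod n)}
    (hσ : ∀ s, ¬ FixedBy n (reflAt n s) σ) : σ ∉ Set.range (rot n) := by
  rintro ⟨r, rfl⟩
  exact hσ 0 (Or.inr (reflAt_conj_rot 0 r))

instance : Finite (HC n) := Subtype.finite

noncomputable instance : Fintype (HC n) := .ofFinite _

end General

section Prime

variable {p : ℕ} [Fact p.Prime]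

lemma eq_rot_of_commute_rot {σ : Perm (ZMod p)} {r : ZMod p} (hr : r ≠ 0)
    (h : Commute (rot p r) σ) : σ = rot p (σ 0) := by
  apply eq_rot_of_commute_rot_one
  have : rot p 1 = rot p r ^ (r⁻¹).val := by
    rw [rot_pow, ZMod.natCast_zmod_val, inv_mul_cancel₀ hr]
  rw [this]
  exact h.pow_left _

lemma two_ne_zero_of_ne_two (hp : p ≠ 2) : (2 : ZMod p) ≠ 0 :=
  Ring.two_ne_zero (by rwa [ZMod.ringChar_zmod_n])

lemma reflAt_apply_eq_self_iff (hp : p ≠ 2) (s x : ZMod p) :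
    reflAt p s x = x ↔ x = s / 2 := by
  rw [reflAt_apply, eq_div_iff (two_ne_zero_of_ne_two hp), sub_eq_iff_eq_add, mul_two,
    eq_comm]

lemma isHC_rot_one : IsHC p (rot p 1) := by
  have hne : ∀ x : ZMod p, rot p 1 x ≠ x := by simp [rot_apply]
  refine ⟨⟨0, hne 0, fun y _ => ⟨y.val, ?_⟩⟩, ?_⟩
  · rw [zpow_natCast, rot_pow, rot_apply, mul_one, add_zero, ZMod.natCast_zmod_val]
  · ext x; simpa using hne x

lemma IsHC.ne_inv (hp : p ≠ 2) {σ : Perm (ZMod p)} (h : IsHC p σ) : σ ≠ σ⁻¹ := by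
  intro he
  have : orderOf σ ∣ 2 := orderOf_dvd_of_pow_eq_one (by rw [sq]; nth_rewrite 2 [he]; simp)
  rw [h.1.orderOf, h.2, Finset.card_univ, ZMod.card] at this
  exact hp ((Nat.prime_dvd_prime_iff_eq Fact.out Nat.prime_two).1 this)

lemma exists_conj_rot_one {σ : Perm (ZMod p)} (hσ : IsHC p σ) :
    ∃ f : Perm (ZMod p), f 0 = 0 ∧ f * rot p 1 * f⁻¹ = σ := by
  obtain ⟨c, rfl⟩ := isConj_iff.1 <| isConj_iff_cycleType_eq.2 <|
    isHC_rot_one.cycleType_eq.trans hσ.cycleType_eq.symm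
  refine ⟨c * rot p (c⁻¹ 0), by simp [rot_apply], ?_⟩
  calc c * rot p (c⁻¹ 0) * rot p 1 * (c * rot p (c⁻¹ 0))⁻¹
      = c * (rot p (c⁻¹ 0) * rot p 1 * (rot p (c⁻¹ 0))⁻¹) * c⁻¹ := by group
    _ = c * rot p 1 * c⁻¹ := by rw [(commute_rot_rot _ _).eq, mul_inv_cancel_right]

/-- `f k` is the `k`-th vertex visited after `0`. -/
noncomputable def baseEquiv : {f : Perm (ZMod p) // f 0 = 0} ≃ HC p :=
  Equiv.ofBijective (fun f => ⟨f.1 * rot p 1 * f.1⁻¹, isHC_rot_one.conj f.1⟩)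
    ⟨fun f g h => Subtype.ext (eq_of_conj_rot_one_eq f.2 g.2 (congrArg Subtype.val h)),
      fun σ => let ⟨f, hf, h⟩ := exists_conj_rot_one σ.2; ⟨⟨f, hf⟩, Subtype.ext h⟩⟩

lemma card_HC : Nat.card (HC p) = (p - 1).factorial := by
  rw [← Nat.card_congr baseEquiv, Perm.card_fixing, Nat.card_zmod]

lemma isHC_rot_iff {r : ZMod p} : IsHC p (rot p r) ↔ r ≠ 0 := by
  refine ⟨fun h hr => h.apply_ne 0 (by simp [hr, rot_zero]), fun hr => ?_⟩
  have : rot p r = Equiv.mulLeft₀ r hr * rot p 1 * (Equiv.mulLeft₀ r hr)⁻¹ := by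
    ext x; simp [rot_apply, mul_add, mul_inv_cancel_left₀ hr]
  rw [this]
  exact isHC_rot_one.conj _

lemma card_rot_HC : Nat.card {σ : HC p // σ.1 ∈ Set.range (rot p)} = p - 1 := by
  have e : {r : ZMod p // r ≠ 0} ≃ {σ : HC p // σ.1 ∈ Set.range (rot p)} :=
    Equiv.ofBijective (fun r => ⟨⟨rot p r, isHC_rot_iff.2 r.2⟩, r, rfl⟩)
      ⟨fun r t h => Subtype.ext (by simpa [rot_apply] using congrArg (fun σ => σ.1.1 0) h),
        fun ⟨σ, r, hr⟩ => ⟨⟨r, isHC_rot_iff.1 (hr ▸ σ.2)⟩, Subtype.ext (Subtype.ext hr)⟩⟩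
  rw [← Nat.card_congr e, Nat.card_eq_fintype_card, Fintype.card_subtype_compl,
    Fintype.card_subtype_eq, ZMod.card]

end Prime

section Symmetric

variable {p : ℕ} [Fact p.Prime]

lemma cycleType_reflAt_zero (hp : p ≠ 2) :
    (reflAt p 0).cycleType = Multiset.replicate ((p - 1) / 2) 2 := by
  have : Fact (Nat.Prime 2) := ⟨Nat.prime_two⟩
  have hsq : reflAt p 0 ^ 2 = 1 := by rw [sq, ← inv_eq_iff_mul_eq_one, reflAt_inv]
  have hsupp : (reflAt p 0).support = Finset.univ.erase 0 := by
    ext x; simp [reflAt_apply_eq_self_iff hp]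
  have hsum := (reflAt p 0).sum_cycleType
  rw [cycleType_of_pow_prime_eq_one hsq] at hsum ⊢
  rw [Multiset.sum_replicate, hsupp, Finset.card_erase_of_mem (Finset.mem_univ _),
    Finset.card_univ, ZMod.card, smul_eq_mul] at hsum
  rw [← hsum, Nat.mul_div_cancel _ two_pos]

lemma card_centralizer_reflAt_zero (hp : p ≠ 2) :
    Nat.card (Subgroup.centralizer {reflAt p 0}) =
      2 ^ ((p - 1) / 2) * ((p - 1) / 2).factorial := by
  have hp3 : 3 ≤ p := (Fact.out : p.Prime).two_le.lt_of_ne' hp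
  obtain ⟨k, hk⟩ := (Fact.out : p.Prime).odd_of_ne_two hp
  rw [Perm.nat_card_centralizer, cycleType_reflAt_zero hp, Multiset.sum_replicate,
    Multiset.prod_replicate, Multiset.toFinset_replicate, if_neg (by omega),
    Finset.prod_singleton, Multiset.count_replicate_self, ZMod.card, smul_eq_mul,
    show p - (p - 1) / 2 * 2 = 1 by omega, Nat.factorial_one, one_mul]

lemma card_reverses_reflAt_zero (hp : p ≠ 2) :
    Nat.card {σ : HC p // Reverses (reflAt p 0) σ.1} =
      2 ^ ((p - 1) / 2) * ((p - 1) / 2).factorial := by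
  have hfix : ∀ f : Perm (ZMod p), Commute (reflAt p 0) f → f 0 = 0 := fun f h =>
    h.apply_eq_self_of_fixed_unique fun x => by rw [reflAt_apply_eq_self_iff hp, zero_div]
  have e : {f : {f : Perm (ZMod p) // f 0 = 0} // Commute (reflAt p 0) f.1} ≃
      Subgroup.centralizer {reflAt p 0} :=
    (Equiv.subtypeSubtypeEquivSubtypeInter _ _).trans <| Equiv.subtypeEquivRight fun f => by
      rw [Subgroup.mem_centralizer_singleton_iff, and_iff_right_of_imp (hfix f)]
      exact eq_comm
  rw [← card_centralizer_reflAt_zero hp, ← Nat.card_congr e]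
  refine (Nat.card_congr (baseEquiv.subtypeEquiv fun f => ?_)).symm
  exact (reverses_conj_rot_one_iff f.2 (by simp [reflAt_apply]) (reflAt_conj_rot 0 1)).symm

lemma card_reverses_reflAt (hp : p ≠ 2) (s : ZMod p) :
    Nat.card {σ : HC p // Reverses (reflAt p s) σ.1} =
      2 ^ ((p - 1) / 2) * ((p - 1) / 2).factorial := by
  have hs : rot p (s / 2) * reflAt p 0 * (rot p (s / 2))⁻¹ = reflAt p s := by
    rw [rot_conj_reflAt, zero_add, mul_div_cancel₀ _ (two_ne_zero_of_ne_two hp)]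
  rw [← card_reverses_reflAt_zero hp]
  refine (Nat.card_congr ((HC.conjEquiv (rot p (s / 2))).subtypeEquiv fun σ => ?_)).symm
  rw [← hs]
  exact (reverses_conj_iff _ _ _).symm

lemma fixedBy_reflAt_iff (hp : p ≠ 2) {σ : Perm (ZMod p)} (hσ : IsHC p σ) (s : ZMod p) :
    FixedBy p (reflAt p s) σ ↔ Reverses (reflAt p s) σ := by
  refine or_iff_right fun h => hσ.apply_ne (s / 2) ?_
  rw [mul_inv_eq_iff_eq_mul] at h
  exact Commute.apply_eq_self_of_fixed_unique h (reflAt_apply_eq_self_iff hp s)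

lemma eq_of_reverses_reflAt {σ : Perm (ZMod p)} (hσ : σ ∉ Set.range (rot p)) {s t : ZMod p}
    (hs : Reverses (reflAt p s) σ) (ht : Reverses (reflAt p t) σ) : s = t := by
  by_contra hst
  have h := hs.commute_mul ht
  rw [reflAt_mul_reflAt] at h
  exact hσ ⟨σ 0, (eq_rot_of_commute_rot (sub_ne_zero.2 hst) h).symm⟩

open Classical in
lemma card_axes (σ : Perm (ZMod p)) :
    Nat.card {s // Reverses (reflAt p s) σ} =
      (if ∃ s, Reverses (reflAt p s) σ then 1 else 0) +
        (if σ ∈ Set.range (rot p) then p - 1 else 0) := by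
  by_cases hrot : σ ∈ Set.range (rot p)
  · obtain ⟨r, rfl⟩ := hrot
    have hp := (Fact.out : p.Prime).one_lt
    have hall : ∀ s, Reverses (reflAt p s) (rot p r) := fun s => reflAt_conj_rot s r
    rw [if_pos ⟨0, hall 0⟩, if_pos ⟨r, rfl⟩, Nat.card_congr (Equiv.subtypeUnivEquiv hall),
      Nat.card_zmod]
    omega
  · have : Subsingleton {s // Reverses (reflAt p s) σ} :=
      ⟨fun s t => Subtype.ext (eq_of_reverses_reflAt hrot s.2 t.2)⟩
    rw [if_neg hrot, add_zero]
    split_ifs with hax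
    · obtain ⟨s, hs⟩ := hax
      have : Unique {s // Reverses (reflAt p s) σ} := uniqueOfSubsingleton ⟨s, hs⟩
      exact Nat.card_unique
    · have : IsEmpty {s // Reverses (reflAt p s) σ} := ⟨fun s => hax ⟨s.1, s.2⟩⟩
      exact Nat.card_of_isEmpty

lemma sq_add_card_symmetric_HC (hp : p ≠ 2) :
    (p - 1) ^ 2 + Nat.card {σ : HC p // ∃ s, Reverses (reflAt p s) σ.1} =
      p * (2 ^ ((p - 1) / 2) * ((p - 1) / 2).factorial) := by
  classical
  have h := Fintype.sum_card_subtype_comm fun (s : ZMod p) (σ : HC p) =>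
    Reverses (reflAt p s) σ.1
  simp only [card_reverses_reflAt hp, card_axes, Finset.sum_const, Finset.card_univ,
    smul_eq_mul, Finset.sum_add_distrib, Finset.sum_boole, Finset.sum_ite,
    Nat.cast_id, mul_zero, add_zero, ← Fintype.card_subtype, ← Nat.card_eq_fintype_card,
    card_rot_HC, Nat.card_zmod] at h
  rw [h, sq, add_comm]

end Symmetric

section Asymmetric

variable {p : ℕ} [Fact p.Prime]

lemma eq_zero_of_rotAct_eq_self {σ : Perm (ZMod p)} (hσ : σ ∉ Set.range (rot p)) {t : ZMod p}
    (h : rotAct p t σ = σ) : t = 0 := by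
  by_contra ht
  exact hσ ⟨σ 0, (eq_rot_of_commute_rot ht ((rotAct_eq_self_iff t σ).1 h)).symm⟩

lemma rotAct_ne_inv (hp : p ≠ 2) {σ : Perm (ZMod p)} (hσ : IsHC p σ)
    (hrot : σ ∉ Set.range (rot p)) (t : ZMod p) : rotAct p t σ ≠ σ⁻¹ := by
  intro h
  have h2 : rotAct p (t + t) σ = σ := by rw [← rotAct_rotAct, h, ← rotAct_inv, h, inv_inv]
  have ht : t = 0 := by
    have := eq_zero_of_rotAct_eq_self hrot h2
    rw [← two_mul] at this
    exact (mul_eq_zero.1 this).resolve_left (two_ne_zero_of_ne_two hp)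
  rw [ht, rotAct_zero] at h
  exact hσ.ne_inv hp h

lemma card_rel_of_asymmetric (hp : p ≠ 2) {σ : HC p}
    (hσ : ∀ s, ¬ FixedBy p (reflAt p s) σ.1) : Nat.card {τ // rotSetoid p σ τ} = 2 * p := by
  have hrot := notMem_range_rot_of_asymmetric hσ
  have hinv : ∀ r r', rotAct p r σ.1 ≠ (rotAct p r' σ.1)⁻¹ := fun r r' h => by
    rw [rotAct_inv, rotAct_eq_rotAct_iff] at h
    exact rotAct_ne_inv hp σ.2 hrot _ h
  have hinj : ∀ r r', rotAct p r σ.1 = rotAct p r' σ.1 → r = r' := fun r r' h =>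
    sub_eq_zero.1 (eq_zero_of_rotAct_eq_self hrot ((rotAct_eq_rotAct_iff _ _ _ _).1 h))
  let f : ZMod p ⊕ ZMod p → {τ // rotSetoid p σ τ} := Sum.elim
    (fun r => ⟨⟨rotAct p r σ.1, σ.2.conj _⟩, r, Or.inl rfl⟩)
    (fun r => ⟨⟨(rotAct p r σ.1)⁻¹, (σ.2.conj _).inv⟩, r, Or.inr rfl⟩)
  have hf : Function.Bijective f := by
    refine ⟨?_, fun ⟨τ, r, hτ⟩ => ?_⟩
    · rintro (r | r) (r' | r') h <;> replace h := congrArg (fun τ => τ.1.1) h <;>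
        simp only [f, Sum.elim_inl, Sum.elim_inr] at h
      · rw [hinj _ _ h]
      · exact (hinv _ _ h).elim
      · exact (hinv _ _ h.symm).elim
      · rw [hinj _ _ (inv_inj.1 h)]
    · rcases hτ with hτ | hτ
      · exact ⟨.inl r, Subtype.ext (Subtype.ext hτ.symm)⟩
      · exact ⟨.inr r, Subtype.ext (Subtype.ext hτ.symm)⟩
  rw [← Nat.card_congr (Equiv.ofBijective f hf), Nat.card_sum, Nat.card_zmod, two_mul]

lemma card_asymmetric_HC (hp : p ≠ 2) :
    Nat.card {σ : HC p // ∀ s, ¬ FixedBy p (reflAt p s) σ.1} =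
      2 * p * Nat.card {q : RotClasses p // ∃ σ : HC p, Quotient.mk (rotSetoid p) σ = q ∧
        ∀ s : ZMod p, ¬ FixedBy p (reflAt p s) σ.1} :=
  Setoid.card_eq_mul_card_classes (rotSetoid p) (fun _ _ h hσ => asymmetric_of_rel h hσ)
    fun _ => card_rel_of_asymmetric hp

lemma card_asymmetric_add_card_symmetric (hp : p ≠ 2) :
    Nat.card {σ : HC p // ∀ s, ¬ FixedBy p (reflAt p s) σ.1} +
      Nat.card {σ : HC p // ∃ s, Reverses (reflAt p s) σ.1} = (p - 1).factorial := by
  classical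
  have e : {σ : HC p // ∀ s, ¬ FixedBy p (reflAt p s) σ.1} ≃
      {σ : HC p // ¬ ∃ s, Reverses (reflAt p s) σ.1} :=
    Equiv.subtypeEquivRight fun σ => by simp only [fixedBy_reflAt_iff hp σ.2, not_exists]
  rw [← card_HC, ← Nat.card_congr (Equiv.sumCompl fun σ : HC p => ∃ s, Reverses (reflAt p s) σ.1),
    Nat.card_sum, Nat.card_congr e, add_comm]

end Asymmetric

/-- the number of rotation classes of Hamiltonian cycles with no axis of
reflective symmetry equals
`((p-1)^2 + (p-1)! - p·(p-1)·2^((p-3)/2)·((p-3)/2)!) / (2p)`. -/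
theorem stmt7 (p : ℕ) [Fact p.Prime] (hp : 5 ≤ p) :
    Nat.card {q : RotClasses p // ∃ σ : HC p, Quotient.mk (rotSetoid p) σ = q ∧
        ∀ s : ZMod p, ¬ FixedBy p (reflAt p s) σ.1}
      = ((p - 1) ^ 2 + Nat.factorial (p - 1)
          - p * (p - 1) * 2 ^ ((p - 3) / 2) * Nat.factorial ((p - 3) / 2)) / (2 * p) := by
  have hp2 : p ≠ 2 := by omega
  have hform : p * (p - 1) * 2 ^ ((p - 3) / 2) * ((p - 3) / 2).factorial =
      p * (2 ^ ((p - 1) / 2) * ((p - 1) / 2).factorial) := by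
    obtain ⟨k, rfl⟩ := (Fact.out : p.Prime).odd_of_ne_two hp2
    obtain ⟨j, rfl⟩ : ∃ j, k = j + 1 := ⟨k - 1, by omega⟩
    rw [show (2 * (j + 1) + 1 - 3) / 2 = j by omega,
      show (2 * (j + 1) + 1 - 1) / 2 = j + 1 by omega,
      show 2 * (j + 1) + 1 - 1 = 2 * (j + 1) by omega, Nat.factorial_succ, pow_succ]
    ring
  rw [hform, ← sq_add_card_symmetric_HC hp2, ← card_asymmetric_add_card_symmetric hp2,
    card_asymmetric_HC hp2, add_left_comm, Nat.add_sub_cancel,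
    Nat.mul_div_cancel_left _ (by omega)]
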